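/- arXiv:2204.07758 — 2 statements merged into one kernel-verified Lean document; each statement's English description precedes it below -/
import Mathlib

section
/- Let k be a field of characteristic 2 and A = (a_{i,j}) the n×(n+1) matrix of indeterminates over k. Let X_j be the signed maximal minor with column j removed and let X_J = X_{j_1}⋯X_{j_s} for a vector J = (j_1,…,j_s) with s odd. Then for any row index r and any column indices i_1, i_2, the second partial derivative ∂_{a_{r,i_1}} ∂_{a_{r,i_2}} X_J = 0 in k[a_{i,j}]. -/
/-!
In row `r` every `X_j` is linear, `X_j = ∑_q a_{r,q} ∂_{r,q} X_j`, and by the cofactor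
identities the row gradients `(∂_{r,q} X_j)_q` lie in the kernel of the other `n - 1` rows of
the generic matrix, a plane over the fraction field. Writing `∂_{r,q} X_j = λ_j α_q + μ_j β_q`
gives `X_j = λ_j A + μ_j B`, so that `∂_{r,i₁} ∂_{r,i₂} X_J` is a second polarization of the
binary form `G = ∏ (λ_j U + μ_j V)` of odd degree, evaluated at `(A, B)`. In characteristic `2`
all second partial derivatives of such a form vanish: for a monomial `U^a V^b` with `a + b` odd,
each of `a (a - 1)`, `a b` and `b (b - 1)` is even.
-/

open MvPolynomial

/-- The generic `n × (n+1)` matrix of indeterminates `a_{i,j}` over `k`. -/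
noncomputable def genMat (n : ℕ) (k : Type*) [CommRing k] :
    Matrix (Fin n) (Fin (n + 1)) (MvPolynomial (Fin n × Fin (n + 1)) k) :=
  fun i j => X (i, j)

/-- `Xdet n k j` is the signed maximal minor of the generic matrix with column `j` deleted. -/
noncomputable def Xdet (n : ℕ) (k : Type*) [CommRing k] (j : Fin (n + 1)) :
    MvPolynomial (Fin n × Fin (n + 1)) k :=
  (-1) ^ (j : ℕ) * ((genMat n k).submatrix id j.succAbove).det

namespace Derivation
variable {R A : Type*} [CommSemiring R] [CommRing A] [Algebra R A]

theorem leibniz_finset_prod {ι : Type*} [DecidableEq ι] (D : Derivation R A A) (s : Finset ι)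
    (f : ι → A) : D (∏ i ∈ s, f i) = ∑ a ∈ s, D (f a) * ∏ t ∈ s.erase a, f t := by
  induction s using Finset.induction_on with
  | empty => simp
  | insert a s ha ih =>
    rw [Finset.prod_insert ha, leibniz, ih, Finset.sum_insert ha, Finset.erase_insert ha]
    rw [smul_eq_mul, smul_eq_mul, Finset.mul_sum, add_comm, mul_comm]
    congr 1
    refine Finset.sum_congr rfl fun b hb => ?_
    rw [Finset.erase_insert_of_ne (ne_of_mem_of_not_mem hb ha).symm,
      Finset.prod_insert fun h => ha (Finset.mem_of_mem_erase h)]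
    ring

theorem apply_apply_finset_prod {ι : Type*} [DecidableEq ι] (D E : Derivation R A A)
    (s : Finset ι) (f : ι → A) (h : ∀ i ∈ s, D (E (f i)) = 0) :
    D (E (∏ i ∈ s, f i)) =
      ∑ a ∈ s, ∑ b ∈ s.erase a, E (f a) * D (f b) * ∏ t ∈ (s.erase a).erase b, f t := by
  rw [leibniz_finset_prod, map_sum]
  refine Finset.sum_congr rfl fun a ha => ?_
  rw [leibniz, h a ha, smul_zero, add_zero, leibniz_finset_prod, smul_eq_mul, Finset.mul_sum]
  simp only [mul_assoc]

theorem map_det {ι : Type*} [Fintype ι] [DecidableEq ι] (D : Derivation R A A)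
    (M : Matrix ι ι A) : D M.det = ∑ t, (M.updateRow t fun q => D (M t q)).det := by
  simp only [Matrix.det_apply, map_sum]
  rw [Finset.sum_comm]
  refine Finset.sum_congr rfl fun σ _ => ?_
  rw [Units.smul_def, map_zsmul, leibniz_finset_prod, ← Finset.smul_sum,
    ← Equiv.sum_comp σ fun t => ∏ i, (M.updateRow t fun q => D (M t q)) (σ i) i]
  refine congrArg _ (Finset.sum_congr rfl fun i _ => ?_)
  rw [← Finset.mul_prod_erase Finset.univ _ (Finset.mem_univ i), Matrix.updateRow_self]
  refine congrArg _ (Finset.prod_congr rfl fun t ht => ?_)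
  rw [Matrix.updateRow_ne (σ.injective.ne (Finset.ne_of_mem_erase ht))]

theorem map_det_of_forall_ne {ι : Type*} [Fintype ι] [DecidableEq ι] (D : Derivation R A A)
    (M : Matrix ι ι A) (r : ι) (h : ∀ t ≠ r, ∀ q, D (M t q) = 0) :
    D M.det = (M.updateRow r fun q => D (M r q)).det := by
  rw [map_det, Finset.sum_eq_single r (fun t _ ht => Matrix.det_eq_zero_of_row_eq_zero t
    fun q => by rw [Matrix.updateRow_self, h t ht]) (by simp)]

end Derivation

section Hessian
variable {K : Type*} [CommRing K] [CharP K 2]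

theorem MvPolynomial.pderiv_pderiv_monomial_eq_zero {σ : Type*} [DecidableEq σ] {i j : σ}
    {m : σ →₀ ℕ} (c : K) (h : Even (m j * (m - Finsupp.single j 1 : σ →₀ ℕ) i)) :
    pderiv i (pderiv j (monomial m c)) = 0 := by
  rw [pderiv_monomial, pderiv_monomial, mul_assoc, ← Nat.cast_mul,
    (CharP.cast_eq_zero_iff K 2 _).2 (even_iff_two_dvd.1 h), mul_zero, monomial_zero]

theorem MvPolynomial.IsHomogeneous.pderiv_pderiv_eq_zero_of_odd {G : MvPolynomial (Fin 2) K}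
    {d : ℕ} (hG : G.IsHomogeneous d) (hd : Odd d) (i j : Fin 2) :
    pderiv i (pderiv j G) = 0 := by
  classical
  rw [G.as_sum, map_sum, map_sum]
  refine Finset.sum_eq_zero fun m hm => pderiv_pderiv_monomial_eq_zero _ ?_
  rcases eq_or_ne i j with rfl | hij
  · simpa using Nat.even_mul_pred_self (m i)
  · have hdeg : m i + m j = d := by
      rw [hG.degree_eq_sum_deg_support hm, Finset.sum_subset (Finset.subset_univ _)
        fun x _ hx => Finsupp.notMem_support_iff.1 hx]
      fin_cases i <;> fin_cases j <;> simp_all [Fin.sum_univ_two, add_comm]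
    rw [Finsupp.tsub_apply, Finsupp.single_eq_of_ne hij, tsub_zero, Nat.even_mul]
    rw [← hdeg, Nat.odd_add'] at hd
    exact (Nat.even_or_odd (m j)).imp_right hd.1

theorem sum_offDiag_linear_mul_prod_linear_eq_zero {ι : Type*} [Fintype ι] [DecidableEq ι]
    (hι : Odd (Fintype.card ι)) (u v : ι → K) (A B a₁ b₁ a₂ b₂ : K) :
    ∑ x, ∑ y ∈ Finset.univ.erase x, (u x * a₂ + v x * b₂) * (u y * a₁ + v y * b₁) *
      ∏ t ∈ (Finset.univ.erase x).erase y, (u t * A + v t * B) = 0 := by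
  let ℓ t : MvPolynomial (Fin 2) K := C (u t) * X 0 + C (v t) * X 1
  let L (a b : K) : Derivation K (MvPolynomial (Fin 2) K) (MvPolynomial (Fin 2) K) :=
    a • pderiv 0 + b • pderiv 1
  have hLℓ a b t : L a b (ℓ t) = C (u t * a + v t * b) := by
    simp [L, ℓ, pderiv_X, smul_eq_C_mul, mul_comm]
  have hG : (∏ t, ℓ t).IsHomogeneous (Fintype.card ι) := by
    simpa using IsHomogeneous.prod Finset.univ ℓ (fun _ => 1)
      fun t _ => (isHomogeneous_C_mul_X _ _).add (isHomogeneous_C_mul_X _ _)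
  have hLL : L a₁ b₁ (L a₂ b₂ (∏ t, ℓ t)) = 0 := by
    simp [L, hG.pderiv_pderiv_eq_zero_of_odd hι]
  rw [Derivation.apply_apply_finset_prod _ _ _ _ fun t _ => by
    rw [hLℓ, ← algebraMap_eq, Derivation.map_algebraMap]] at hLL
  simpa [hLℓ, ℓ] using congrArg (eval ![A, B]) hLL

end Hessian

section Xdet
variable {n : ℕ} {k : Type*} [CommRing k]

theorem pderiv_genMat (r t : Fin n) (i q : Fin (n + 1)) :
    pderiv (r, i) (genMat n k t q) = if t = r ∧ q = i then 1 else 0 := by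
  simp [genMat, pderiv_X, Pi.single_apply]

theorem pderiv_det_genMat_submatrix (r : Fin n) (σ : Fin n → Fin (n + 1)) (i : Fin (n + 1)) :
    pderiv (r, i) ((genMat n k).submatrix id σ).det =
      (((genMat n k).submatrix id σ).updateRow r fun c => if σ c = i then 1 else 0).det := by
  rw [Derivation.map_det_of_forall_ne _ _ r fun t ht q => by simp [pderiv_genMat, ht]]
  simp [pderiv_genMat]

theorem pderiv_Xdet (v : Fin n × Fin (n + 1)) (j : Fin (n + 1)) :
    pderiv v (Xdet n k j) =
      C ((-1) ^ (j : ℕ)) * pderiv v ((genMat n k).submatrix id j.succAbove).det := by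
  rw [Xdet, show ((-1) ^ (j : ℕ) : MvPolynomial _ k) = C ((-1) ^ (j : ℕ)) by simp, pderiv_C_mul]

theorem pderiv_pderiv_Xdet (r : Fin n) (p i j : Fin (n + 1)) :
    pderiv (r, p) (pderiv (r, i) (Xdet n k j)) = 0 := by
  rw [pderiv_Xdet, pderiv_det_genMat_submatrix, pderiv_C_mul,
    Derivation.map_det_of_forall_ne _ _ r fun t ht q => by
      simp [pderiv_genMat, ht],
    Matrix.det_eq_zero_of_row_eq_zero r fun q => by simp [apply_ite], mul_zero]

theorem sum_X_mul_pderiv_Xdet (r t : Fin n) (j : Fin (n + 1)) :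
    ∑ q, X (t, q) * pderiv (r, q) (Xdet n k j) = if t = r then Xdet n k j else 0 := by
  set M := (genMat n k).submatrix id j.succAbove
  have hcof c : pderiv (r, j.succAbove c) M.det = M.adjugate c r := by
    rw [pderiv_det_genMat_submatrix, Matrix.adjugate_apply]
    congr 2
    ext c'
    simp [Pi.single_apply, j.succAbove_right_injective.eq_iff]
  have hj : pderiv (r, j) M.det = 0 := by
    rw [pderiv_det_genMat_submatrix]
    exact Matrix.det_eq_zero_of_row_eq_zero r fun c => by simp [Fin.succAbove_ne]
  calc ∑ q, X (t, q) * pderiv (r, q) (Xdet n k j)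
      = C ((-1) ^ (j : ℕ)) * ∑ c, M t c * M.adjugate c r := by
        rw [Fin.sum_univ_succAbove _ j, pderiv_Xdet, hj, mul_zero, mul_zero, zero_add,
          Finset.mul_sum]
        refine Finset.sum_congr rfl fun c _ => ?_
        rw [pderiv_Xdet, hcof, show M t c = X (t, j.succAbove c) from rfl]
        ring
    _ = if t = r then Xdet n k j else 0 := by
        rw [← Matrix.mul_apply, Matrix.mul_adjugate, Matrix.smul_apply, Matrix.one_apply]
        split_ifs <;> simp [Xdet, M]

end Xdet

theorem Matrix.rank_eq_card_height_of_det_submatrix_ne_zero {K : Type*} [Field K]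
    {ι κ : Type*} [Fintype ι] [Fintype κ] [DecidableEq ι] [DecidableEq κ] (M : Matrix ι κ K)
    (e : ι → κ) (h : (M.submatrix id e).det ≠ 0) : M.rank = Fintype.card ι := by
  refine le_antisymm M.rank_le_card_height ?_
  have := M.rank_mul_le_left ((1 : Matrix κ κ K).submatrix (Equiv.refl κ) e)
  rwa [Matrix.mul_submatrix_one, Equiv.refl_symm, Equiv.coe_refl, Function.id_comp,
    Matrix.rank_of_isUnit _ ((Matrix.isUnit_iff_isUnit_det _).2 h.isUnit)] at this

section Rank
variable {n : ℕ} {k : Type*} [CommRing k] [Nontrivial k]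

theorem det_genMat_submatrix_ne_zero {ι : Type*} [Fintype ι] [DecidableEq ι] {g : ι → Fin n}
    {e : ι → Fin (n + 1)} (hg : g.Injective) (he : e.Injective) :
    ((genMat n k).submatrix g e).det ≠ 0 := by
  have : (genMat n k).submatrix g e =
      (rename fun p : ι × ι => (g p.1, e p.2)).mapMatrix (Matrix.mvPolynomialX ι ι k) := by
    ext; simp [genMat, Matrix.mvPolynomialX]
  rw [this, ← AlgHom.map_det]
  exact (map_ne_zero_iff _ (rename_injective _ (hg.prodMap he))).2
    (Matrix.det_mvPolynomialX_ne_zero ι k)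

theorem exists_pderiv_Xdet_eq_linear_combination {K : Type*} [Field K]
    (φ : MvPolynomial (Fin n × Fin (n + 1)) k →+* K) (hφ : Function.Injective φ) (r : Fin n) :
    ∃ α β : Fin (n + 1) → K, ∀ j, ∃ c d : K, ∀ q,
      φ (pderiv (r, q) (Xdet n k j)) = c * α q + d * β q := by
  let B : Matrix {t // t ≠ r} (Fin (n + 1)) K := fun t q => φ (X (t.1, q))
  have hrank : B.rank = n - 1 := by
    rw [B.rank_eq_card_height_of_det_submatrix_ne_zero (Fin.castSucc ∘ Subtype.val) ?_]
    · simp [Fintype.card_subtype_compl]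
    · have : B.submatrix id (Fin.castSucc ∘ Subtype.val) =
          φ.mapMatrix ((genMat n k).submatrix Subtype.val (Fin.castSucc ∘ Subtype.val)) := rfl
      rw [this, ← RingHom.map_det, map_ne_zero_iff _ hφ]
      exact det_genMat_submatrix_ne_zero Subtype.val_injective
        ((Fin.castSucc_injective _).comp Subtype.val_injective)
  have hker : Module.finrank K (LinearMap.ker B.mulVecLin) = 2 := by
    have := LinearMap.finrank_range_add_finrank_ker B.mulVecLin
    rw [Module.finrank_fintype_fun_eq_card, Fintype.card_fin] at this
    change B.rank + _ = _ at this
    have := r.pos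
    omega
  let b := Module.finBasisOfFinrankEq K _ hker
  refine ⟨b 0, b 1, fun j => ?_⟩
  have hmem : (fun q => φ (pderiv (r, q) (Xdet n k j))) ∈ LinearMap.ker B.mulVecLin := by
    rw [LinearMap.mem_ker, Matrix.mulVecLin_apply]
    ext t
    simp only [Matrix.mulVec, dotProduct, B, ← map_mul, ← map_sum,
      sum_X_mul_pderiv_Xdet, if_neg t.2, map_zero, Pi.zero_apply]
  refine ⟨b.repr ⟨_, hmem⟩ 0, b.repr ⟨_, hmem⟩ 1, fun q => ?_⟩
  have h := congrArg (fun w : LinearMap.ker B.mulVecLin => (w : Fin (n + 1) → K) q)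
    (b.sum_repr ⟨_, hmem⟩)
  simp only [Fin.sum_univ_two, Submodule.coe_add, Submodule.coe_smul, Pi.add_apply,
    Pi.smul_apply, smul_eq_mul] at h
  exact h.symm

end Rank

section Main
variable {n : ℕ} {k : Type*} [Field k] [CharP k 2]

theorem pderiv_pderiv_prod_Xdet_eq_zero {ι : Type*} [Fintype ι] [DecidableEq ι]
    (hι : Odd (Fintype.card ι)) (f : ι → Fin (n + 1)) (r : Fin n) (i₁ i₂ : Fin (n + 1)) :
    pderiv (r, i₁) (pderiv (r, i₂) (∏ a, Xdet n k (f a))) = 0 := by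
  let φ := algebraMap (MvPolynomial (Fin n × Fin (n + 1)) k)
    (FractionRing (MvPolynomial (Fin n × Fin (n + 1)) k))
  have hφ : Function.Injective φ := IsFractionRing.injective _ _
  have : CharP (FractionRing (MvPolynomial (Fin n × Fin (n + 1)) k)) 2 :=
    charP_of_injective_algebraMap hφ 2
  obtain ⟨α, β, hαβ⟩ := exists_pderiv_Xdet_eq_linear_combination φ hφ r
  choose c d hcd using hαβ
  set A := ∑ q, φ (X (r, q)) * α q
  set B := ∑ q, φ (X (r, q)) * β q
  have hX j : φ (Xdet n k j) = c j * A + d j * B := by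
    have := sum_X_mul_pderiv_Xdet (k := k) r r j
    rw [if_pos rfl] at this
    rw [← this, map_sum, Finset.mul_sum, Finset.mul_sum, ← Finset.sum_add_distrib]
    refine Finset.sum_congr rfl fun q _ => ?_
    rw [map_mul, hcd]
    ring
  apply hφ
  rw [Derivation.apply_apply_finset_prod _ _ _ _ fun a _ => pderiv_pderiv_Xdet _ _ _ _, map_zero]
  simp only [map_sum, map_mul, map_prod, hcd, hX]
  exact sum_offDiag_linear_mul_prod_linear_eq_zero hι (c ∘ f) (d ∘ f) A B _ _ _ _

end Main

/-- let `k` be a field of characteristic `2` and `X_J = X_{j_1} ⋯ X_{j_s}` a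
product of an odd number of maximal minors of the generic `n × (n+1)` matrix.  Then any two
formal partial derivatives taken in the same row `r` annihilate `X_J`:
`∂_{a_{r,i₁}} ∂_{a_{r,i₂}} X_J = 0`. -/
theorem stmt_8 (n : ℕ) (k : Type*) [Field k] [CharP k 2]
    (J : Multiset (Fin (n + 1))) (hJ : Odd (Multiset.card J))
    (r : Fin n) (i₁ i₂ : Fin (n + 1)) :
    pderiv (r, i₁) (pderiv (r, i₂) ((J.map (Xdet n k)).prod)) = 0 := by
  rw [← Multiset.coe_toList J, Multiset.map_coe, Multiset.prod_coe,
    ← Fin.prod_univ_fun_getElem]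
  exact pderiv_pderiv_prod_Xdet_eq_zero (by simpa using hJ) _ r i₁ i₂
end

section
/- Let Δ be a pseudo-manifold of dimension n−1 over a field K of characteristic 2 and suppose the Papadakis–Petrotou identity holds: for all integer vectors I (with n components) and J, ∂_I W_Δ(x_J) = (W_Δ(√(x_I x_J)))² if the monomial x_I x_J is a square, and 0 otherwise. Then for any h ∈ K[x_1,…,x_N]_m and vectors I, J with n and n−2m components respectively: ∂_I W_Δ(h² x_J) = (W_Δ(h √(x_I x_J)))² if x_I x_J is a square, and 0 otherwise. -/
open MvPolynomial

/-- The monomial `x_J` indexed by a multiset of variable indices. -/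
noncomputable def xMon {K : Type*} [Field K] {N : ℕ} (J : Multiset (Fin N)) :
    MvPolynomial (Fin N) K :=
  (J.map X).prod

/-- The iterated derivative `∂_I = ∂_{a_{1,i_1}} ⋯ ∂_{a_{n,i_n}}` acting on the coefficient
field `K`, built from a family `D r j = ∂_{a_{r,j}}` of derivations of `K`. -/
noncomputable def derivI {K : Type*} [Field K] {n N : ℕ}
    (D : Fin n → Fin N → Derivation ℤ K K) (I : Fin n → Fin N) (f : K) : K :=
  (List.ofFn fun r : Fin n => (D r (I r) : K →ₗ[ℤ] K)).foldr (fun φ x => φ x) f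

/-!
In characteristic 2 the Frobenius gives `h² = Σ_d c_d² x_d²` for `h = Σ_d c_d x_d`, and every
derivation kills squares, so `∂_I W(h² x_J) = Σ_d c_d² ∂_I W(x_d² x_J)`. The Papadakis–Petrotou
identity evaluates each term: `x_I x_d² x_J` is a square exactly when `x_I x_J` is, with square
root `x_d √(x_I x_J)`, and summing back with the Frobenius gives `(W(h √(x_I x_J)))²`.
-/

theorem Module.End.foldr_apply_eq_list_prod_apply {R M : Type*} [Semiring R] [AddCommMonoid M]
    [Module R M] (l : List (Module.End R M)) (x : M) :
    l.foldr (fun φ y => φ y) x = l.prod x := by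
  induction l with
  | nil => rfl
  | cons φ l ih => rw [List.foldr_cons, ih, List.prod_cons, Module.End.mul_apply]

theorem Derivation.map_pow_char_mul {R A : Type*} [CommSemiring R] [CommRing A] [Algebra R A]
    (p : ℕ) [CharP A p] (δ : Derivation R A A) (a c : A) :
    δ (a ^ p * c) = a ^ p * δ c := by
  rw [Derivation.leibniz, Derivation.leibniz_pow, nsmul_eq_mul, CharP.cast_eq_zero, zero_mul,
    smul_zero, add_zero, smul_eq_mul]

theorem Multiset.even_of_even_add_add_self {α : Type*} {A B : Multiset α}
    (h : Even (A + (B + B))) : Even A := by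
  classical
  obtain ⟨M, hM⟩ := h
  have hBM : B ≤ M := Multiset.le_iff_count.mpr fun a => by
    have := congrArg (Multiset.count a) hM
    simp only [Multiset.count_add] at this
    omega
  obtain ⟨L, rfl⟩ := Multiset.le_iff_exists_add.mp hBM
  refine ⟨L, add_right_cancel (b := B + B) ?_⟩
  rw [hM]
  abel

section derivI

variable {K : Type*} [Field K] {n N : ℕ} (D : Fin n → Fin N → Derivation ℤ K K)
  (I : Fin n → Fin N)

theorem derivI_eq_list_prod_apply (f : K) :
    derivI D I f = (List.ofFn fun r => (D r (I r) : Module.End ℤ K)).prod f :=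
  Module.End.foldr_apply_eq_list_prod_apply _ f

theorem derivI_sum {ι : Type*} (s : Finset ι) (f : ι → K) :
    derivI D I (∑ i ∈ s, f i) = ∑ i ∈ s, derivI D I (f i) := by
  simp only [derivI_eq_list_prod_apply, map_sum]

theorem derivI_pow_char_mul (p : ℕ) [CharP K p] (a c : K) :
    derivI D I (a ^ p * c) = a ^ p * derivI D I c := by
  rw [derivI_eq_list_prod_apply, derivI_eq_list_prod_apply]
  induction n generalizing c with
  | zero => rfl
  | succ k ih =>
    simp only [List.ofFn_succ, List.prod_cons, Module.End.mul_apply]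
    rw [ih (fun r => D r.succ) (fun r => I r.succ)]
    exact Derivation.map_pow_char_mul p _ a _

end derivI

theorem MvPolynomial.map_monomial_mul {σ R : Type*} [CommSemiring R]
    (W : MvPolynomial σ R →ₗ[R] R) (d : σ →₀ ℕ) (c : R) (p : MvPolynomial σ R) :
    W (monomial d c * p) = c * W (monomial d 1 * p) := by
  rw [← smul_eq_mul c, ← map_smul, ← smul_mul_assoc, smul_monomial, smul_eq_mul, mul_one]

section xMon

variable {K : Type*} [Field K] {N : ℕ}

theorem xMon_add (A B : Multiset (Fin N)) :
    (xMon (A + B) : MvPolynomial (Fin N) K) = xMon A * xMon B := by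
  simp only [xMon, Multiset.map_add, Multiset.prod_add]

theorem xMon_toMultiset (d : Fin N →₀ ℕ) :
    (xMon d.toMultiset : MvPolynomial (Fin N) K) = monomial d 1 := by
  induction d using Finsupp.induction with
  | zero => simp [xMon]
  | single_add a k f _ _ ih =>
    rw [Finsupp.toMultiset_add, xMon_add, ih, Finsupp.toMultiset_single]
    simp [xMon, Multiset.map_nsmul, Multiset.prod_nsmul, X_pow_eq_monomial, monomial_mul]

theorem map_mul_xMon_eq_sum (W : MvPolynomial (Fin N) K →ₗ[K] K) (h : MvPolynomial (Fin N) K)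
    (L : Multiset (Fin N)) :
    W (h * xMon L) = ∑ d ∈ h.support, coeff d h * W (xMon (d.toMultiset + L)) := by
  conv_lhs => rw [← support_sum_monomial_coeff h]
  rw [Finset.sum_mul, map_sum]
  refine Finset.sum_congr rfl fun d _ => ?_
  rw [map_monomial_mul, xMon_add, xMon_toMultiset]

theorem map_sq_mul_xMon_eq_sum [CharP K 2] (W : MvPolynomial (Fin N) K →ₗ[K] K)
    (h : MvPolynomial (Fin N) K) (J : Multiset (Fin N)) :
    W (h ^ 2 * xMon J) =
      ∑ d ∈ h.support, coeff d h ^ 2 * W (xMon (d.toMultiset + d.toMultiset + J)) := by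
  conv_lhs => rw [← support_sum_monomial_coeff h]
  rw [sum_pow_char, Finset.sum_mul, map_sum]
  refine Finset.sum_congr rfl fun d _ => ?_
  rw [monomial_pow, map_monomial_mul, two_nsmul, xMon_add, xMon_add, xMon_toMultiset,
    monomial_mul, one_mul]

end xMon

theorem stmt_10_general (K : Type*) [Field K] [CharP K 2] (n N : ℕ)
    (D : Fin n → Fin N → Derivation ℤ K K)
    (W : MvPolynomial (Fin N) K →ₗ[K] K)
    (hPP1 : ∀ (I : Fin n → Fin N) (J L : Multiset (Fin N)),
      (List.ofFn I : Multiset (Fin N)) + J = L + L →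
      derivI D I (W (xMon J)) = (W (xMon L)) ^ 2)
    (hPP2 : ∀ (I : Fin n → Fin N) (J : Multiset (Fin N)),
      (¬ ∃ L : Multiset (Fin N), (List.ofFn I : Multiset (Fin N)) + J = L + L) →
      derivI D I (W (xMon J)) = 0)
    (h : MvPolynomial (Fin N) K)
    (I : Fin n → Fin N) (J : Multiset (Fin N)) :
    (∀ L : Multiset (Fin N), (List.ofFn I : Multiset (Fin N)) + J = L + L →
      derivI D I (W (h ^ 2 * xMon J)) = (W (h * xMon L)) ^ 2) ∧
    ((¬ ∃ L : Multiset (Fin N), (List.ofFn I : Multiset (Fin N)) + J = L + L) →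
      derivI D I (W (h ^ 2 * xMon J)) = 0) := by
  have expand : derivI D I (W (h ^ 2 * xMon J)) = ∑ d ∈ h.support,
      coeff d h ^ 2 * derivI D I (W (xMon (d.toMultiset + d.toMultiset + J))) := by
    simp only [map_sq_mul_xMon_eq_sum, derivI_sum, derivI_pow_char_mul D I 2]
  refine ⟨fun L hL => ?_, fun hodd => ?_⟩
  · rw [expand, map_mul_xMon_eq_sum, sum_pow_char]
    refine Finset.sum_congr rfl fun d _ => ?_
    have hsq : (List.ofFn I : Multiset (Fin N)) + (d.toMultiset + d.toMultiset + J) =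
        (d.toMultiset + L) + (d.toMultiset + L) := by
      rw [add_add_add_comm _ L, ← hL]
      abel
    rw [hPP1 I _ _ hsq, mul_pow]
  · rw [expand]
    refine Finset.sum_eq_zero fun d _ => ?_
    refine mul_eq_zero_of_right _ (hPP2 I _ fun heven => hodd ?_)
    rw [← add_assoc, add_right_comm] at heven
    exact Multiset.even_of_even_add_add_self heven

/-- let `K` have characteristic 2, `W : K[x₁,…,x_N]_n → K` the mixed volume
(a `K`-linear functional), and suppose the Papadakis–Petrotou identity holds:
`∂_I W(x_J) = (W(√(x_I x_J)))²` when `x_I x_J` is a square and `0` otherwise.  Then for any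
homogeneous `h` of degree `m` and `I, J` with `n` and `n − 2m` components,
`∂_I W(h² x_J) = (W(h·√(x_I x_J)))²` when `x_I x_J` is a square, and `0` otherwise. -/
theorem stmt_10 (K : Type*) [Field K] [CharP K 2] (n N m : ℕ) (hm : 2 * m ≤ n)
    (D : Fin n → Fin N → Derivation ℤ K K)
    (W : MvPolynomial (Fin N) K →ₗ[K] K)
    (hPP1 : ∀ (I : Fin n → Fin N) (J L : Multiset (Fin N)),
      (List.ofFn I : Multiset (Fin N)) + J = L + L →
      derivI D I (W (xMon J)) = (W (xMon L)) ^ 2)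
    (hPP2 : ∀ (I : Fin n → Fin N) (J : Multiset (Fin N)),
      (¬ ∃ L : Multiset (Fin N), (List.ofFn I : Multiset (Fin N)) + J = L + L) →
      derivI D I (W (xMon J)) = 0)
    (h : MvPolynomial (Fin N) K) (hh : h.IsHomogeneous m)
    (I : Fin n → Fin N) (J : Multiset (Fin N)) (hJ : Multiset.card J = n - 2 * m) :
    (∀ L : Multiset (Fin N), (List.ofFn I : Multiset (Fin N)) + J = L + L →
      derivI D I (W (h ^ 2 * xMon J)) = (W (h * xMon L)) ^ 2) ∧
    ((¬ ∃ L : Multiset (Fin N), (List.ofFn I : Multiset (Fin N)) + J = L + L) →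
      derivI D I (W (h ^ 2 * xMon J)) = 0) :=
  stmt_10_general K n N D W hPP1 hPP2 h I J
end
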